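/- Let H be a real Hilbert space with compatible triple (g,J,ω) and L^± = ker(J ∓ i) ⊂ H_ℂ. The relation W₁⁺ ∼ W₂⁺ on the set Pol^g(H) of orthogonal polarizations, defined by 'the orthogonal projection W₁⁺ → α(W₂⁺) is Hilbert–Schmidt', is an equivalence relation. -/

import Mathlib

/-- A (bounded) operator on a complex Hilbert space is Hilbert–Schmidt if ∑ ‖T eᵢ‖² converges
for some (equivalently any) Hilbert basis. -/
def IsHilbertSchmidt {E : Type} [NormedAddCommGroup E] [InnerProductSpace ℂ E]
    (T : E →L[ℂ] E) : Prop :=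
  ∃ (ι : Type) (b : HilbertBasis ι ℂ E), Summable fun i => ‖T (b i)‖ ^ 2

/-- P is the orthogonal projection of E onto the set S. -/
def IsOrthProjOn {E : Type} [NormedAddCommGroup E] [InnerProductSpace ℂ E]
    (S : Set E) (P : E →L[ℂ] E) : Prop :=
  (∀ x, P x ∈ S) ∧ (∀ x ∈ S, P x = x) ∧ (∀ x, ∀ s ∈ S, (inner ℂ (x - P x) s : ℂ) = 0)

/-- W is an orthogonal polarization: W is closed, W ⊥ α(W), and E = W + α(W). -/
def IsOrthPolarization {E : Type} [NormedAddCommGroup E] [InnerProductSpace ℂ E]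
    (α : E → E) (W : Submodule ℂ E) : Prop :=
  IsClosed (W : Set E) ∧
  (∀ x ∈ W, ∀ y ∈ W, (inner ℂ x (α y) : ℂ) = 0) ∧
  (∀ z : E, ∃ x ∈ W, ∃ y ∈ W, z = x + α y)

/-- The relation W₁ ∼ W₂: the restriction to W₁ of the orthogonal projection onto α(W₂) is
Hilbert–Schmidt (expressed as: the composite of the orthogonal projection onto W₁ followed by
the orthogonal projection onto α(W₂) is Hilbert–Schmidt). -/
def HSRel {E : Type} [NormedAddCommGroup E] [InnerProductSpace ℂ E]
    (α : E → E) (W₁ W₂ : Submodule ℂ E) : Prop :=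
  ∀ P Q : E →L[ℂ] E, IsOrthProjOn (W₁ : Set E) P → IsOrthProjOn (α '' (W₂ : Set E)) Q →
    IsHilbertSchmidt (Q.comp P)


/-! An orthogonal polarization satisfies `α '' W = Wᗮ`, so `W₁ ∼ W₂` says that `P_{W₂ᗮ} P_{W₁}` is
Hilbert–Schmidt. Reflexivity is `P_{Wᗮ} P_W = 0`. Transitivity follows by inserting
`1 = P_{W₂} + P_{W₂ᗮ}` and using that Hilbert–Schmidt operators form a two-sided ideal.
For symmetry, pass to the adjoint `P_{W₁} P_{W₂ᗮ}` and conjugate by `α`: it swaps `W` and `Wᗮ`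
for every polarization, hence intertwines `P_W` with `P_{Wᗮ}`, and it maps Hilbert bases to
Hilbert bases, so conjugation by `α` preserves the Hilbert–Schmidt property. -/

open scoped InnerProductSpace InnerProduct ENNReal

section HilbertBasis

variable {ι 𝕜 E : Type*} [RCLike 𝕜] [NormedAddCommGroup E] [InnerProductSpace 𝕜 E]

theorem HilbertBasis.hasSum_norm_inner_sq (b : HilbertBasis ι 𝕜 E) (x : E) :
    HasSum (fun i => ‖⟪b i, x⟫_𝕜‖ ^ 2) (‖x‖ ^ 2) := by
  simpa [b.repr_apply_apply] using lp.hasSum_norm (p := 2) (by norm_num) (b.repr x)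

theorem HilbertBasis.tsum_enorm_inner_sq (b : HilbertBasis ι 𝕜 E) (x : E) :
    ∑' i, ‖⟪b i, x⟫_𝕜‖ₑ ^ 2 = ‖x‖ₑ ^ 2 := by
  simp_rw [← ofReal_norm, ← ENNReal.ofReal_pow (norm_nonneg _)]
  rw [← ENNReal.ofReal_tsum_of_nonneg (fun _ => by positivity) (b.hasSum_norm_inner_sq x).summable,
    (b.hasSum_norm_inner_sq x).tsum_eq]

theorem norm_eq_of_inner_map_map {α : E → E} (hα_inner : ∀ x y, ⟪α x, α y⟫_𝕜 = ⟪y, x⟫_𝕜)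
    (x : E) : ‖α x‖ = ‖x‖ := by
  rw [@norm_eq_sqrt_re_inner 𝕜, @norm_eq_sqrt_re_inner 𝕜 _ _ _ _ x, hα_inner]

theorem HilbertBasis.exists_coe_eq_comp [CompleteSpace E] {α : E → E}
    (hα_inner : ∀ x y, ⟪α x, α y⟫_𝕜 = ⟪y, x⟫_𝕜) (hα_surj : Function.Surjective α)
    (b : HilbertBasis ι 𝕜 E) :
    ∃ b' : HilbertBasis ι 𝕜 E, ⇑b' = α ∘ b := by
  classical
  have hon : Orthonormal 𝕜 (α ∘ b) := by
    rw [orthonormal_iff_ite]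
    intro i j
    rw [Function.comp_apply, Function.comp_apply, hα_inner, orthonormal_iff_ite.1 b.orthonormal j i]
    exact if_congr eq_comm rfl rfl
  refine ⟨HilbertBasis.mkOfOrthogonalEqBot hon ((Submodule.eq_bot_iff _).2 fun x hx => ?_),
    HilbertBasis.coe_mkOfOrthogonalEqBot _ _⟩
  obtain ⟨y, rfl⟩ := hα_surj x
  have hy : ∀ i, ⟪b i, y⟫_𝕜 = 0 := fun i => by
    rw [inner_eq_zero_symm, ← hα_inner]
    exact (Submodule.mem_orthogonal _ _).1 hx _ (Submodule.subset_span ⟨i, rfl⟩)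
  have : ‖y‖ ^ 2 = 0 := (b.hasSum_norm_inner_sq y).unique (by simp [hy])
  rw [← norm_eq_zero, norm_eq_of_inner_map_map hα_inner]
  exact (pow_eq_zero_iff two_ne_zero).1 this

end HilbertBasis

theorem summable_norm_sq_iff_tsum_enorm_sq_ne_top {ι F : Type*} [SeminormedAddCommGroup F]
    (x : ι → F) : (Summable fun i => ‖x i‖ ^ 2) ↔ ∑' i, ‖x i‖ₑ ^ 2 ≠ ⊤ := by
  simp_rw [enorm_eq_nnnorm, ← ENNReal.coe_pow, ENNReal.tsum_coe_ne_top_iff_summable,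
    ← NNReal.summable_coe, NNReal.coe_pow, coe_nnnorm]

section HilbertSchmidt

variable {E : Type} [NormedAddCommGroup E] [InnerProductSpace ℂ E] {S T : E →L[ℂ] E}

theorem IsHilbertSchmidt.clm_comp (hT : IsHilbertSchmidt T) (S : E →L[ℂ] E) :
    IsHilbertSchmidt (S ∘L T) := by
  obtain ⟨ι, b, hb⟩ := hT
  refine ⟨ι, b, (hb.mul_left (‖S‖ ^ 2)).of_nonneg_of_le (fun _ => by positivity) fun i => ?_⟩
  rw [← mul_pow]
  exact pow_le_pow_left₀ (norm_nonneg _) (S.le_opNorm _) 2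

variable [CompleteSpace E]

open ContinuousLinearMap in
theorem HilbertBasis.tsum_enorm_apply_sq_eq_adjoint {ι κ : Type*} (b : HilbertBasis ι ℂ E)
    (f : HilbertBasis κ ℂ E) (T : E →L[ℂ] E) :
    ∑' i, ‖T (b i)‖ₑ ^ 2 = ∑' j, ‖(T†) (f j)‖ₑ ^ 2 :=
  calc ∑' i, ‖T (b i)‖ₑ ^ 2
      = ∑' i, ∑' j, ‖⟪f j, T (b i)⟫_ℂ‖ₑ ^ 2 := by simp_rw [f.tsum_enorm_inner_sq]
    _ = ∑' j, ∑' i, ‖⟪b i, (T†) (f j)⟫_ℂ‖ₑ ^ 2 := by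
        rw [ENNReal.tsum_comm]
        simp_rw [← adjoint_inner_left T, ← enorm_norm (⟪_, _⟫_ℂ), norm_inner_symm]
    _ = ∑' j, ‖(T†) (f j)‖ₑ ^ 2 := by simp_rw [b.tsum_enorm_inner_sq]

theorem HilbertBasis.tsum_enorm_apply_sq_eq {ι κ : Type*} (b : HilbertBasis ι ℂ E)
    (f : HilbertBasis κ ℂ E) (T : E →L[ℂ] E) :
    ∑' i, ‖T (b i)‖ₑ ^ 2 = ∑' j, ‖T (f j)‖ₑ ^ 2 := by
  rw [b.tsum_enorm_apply_sq_eq_adjoint f T, f.tsum_enorm_apply_sq_eq_adjoint f T]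

theorem IsHilbertSchmidt.of_semiconj {α : E → E} (hα_inner : ∀ x y, ⟪α x, α y⟫_ℂ = ⟪y, x⟫_ℂ)
    (hα_surj : Function.Surjective α) (hT : IsHilbertSchmidt T) (h : Function.Semiconj α T S) :
    IsHilbertSchmidt S := by
  obtain ⟨ι, b, hb⟩ := hT
  obtain ⟨b', hb'⟩ := b.exists_coe_eq_comp hα_inner hα_surj
  refine ⟨ι, b', ?_⟩
  simpa only [hb', Function.comp_apply, ← h (b _), norm_eq_of_inner_map_map hα_inner] using hb

theorem isHilbertSchmidt_iff_summable {ι : Type} (b : HilbertBasis ι ℂ E) :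
    IsHilbertSchmidt T ↔ Summable fun i => ‖T (b i)‖ ^ 2 := by
  refine ⟨fun ⟨κ, f, hf⟩ => ?_, fun h => ⟨ι, b, h⟩⟩
  rw [summable_norm_sq_iff_tsum_enorm_sq_ne_top] at hf ⊢
  rwa [b.tsum_enorm_apply_sq_eq f]

theorem isHilbertSchmidt_zero : IsHilbertSchmidt (0 : E →L[ℂ] E) :=
  let ⟨_, b, _⟩ := exists_hilbertBasis ℂ E
  ⟨_, b, by simp⟩

theorem IsHilbertSchmidt.adjoint (hT : IsHilbertSchmidt T) : IsHilbertSchmidt (T†) := by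
  obtain ⟨ι, b, hb⟩ := hT
  refine ⟨ι, b, ?_⟩
  rw [summable_norm_sq_iff_tsum_enorm_sq_ne_top] at hb ⊢
  rwa [← b.tsum_enorm_apply_sq_eq_adjoint b]

theorem IsHilbertSchmidt.comp_clm (hT : IsHilbertSchmidt T) (S : E →L[ℂ] E) :
    IsHilbertSchmidt (T ∘L S) := by
  simpa using (hT.adjoint.clm_comp (S†)).adjoint

theorem IsHilbertSchmidt.add (hS : IsHilbertSchmidt S) (hT : IsHilbertSchmidt T) :
    IsHilbertSchmidt (S + T) := by
  obtain ⟨ι, b, hb⟩ := hS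
  rw [isHilbertSchmidt_iff_summable b] at hT ⊢
  refine ((hb.add hT).mul_left 2).of_nonneg_of_le (fun _ => by positivity) fun i => ?_
  calc ‖(S + T) (b i)‖ ^ 2 ≤ (‖S (b i)‖ + ‖T (b i)‖) ^ 2 := by gcongr; exact norm_add_le _ _
    _ ≤ 2 * (‖S (b i)‖ ^ 2 + ‖T (b i)‖ ^ 2) := add_sq_le

end HilbertSchmidt

section Projection

variable {E : Type} [NormedAddCommGroup E] [InnerProductSpace ℂ E]

theorem isOrthProjOn_starProjection (K : Submodule ℂ E) [K.HasOrthogonalProjection] :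
    IsOrthProjOn (K : Set E) K.starProjection :=
  ⟨K.starProjection_apply_mem, fun _ => Submodule.starProjection_eq_self_iff.2,
    K.starProjection_inner_eq_zero⟩

theorem IsOrthProjOn.eq_starProjection {K : Submodule ℂ E} [K.HasOrthogonalProjection]
    {P : E →L[ℂ] E} (h : IsOrthProjOn (K : Set E) P) : P = K.starProjection :=
  ContinuousLinearMap.ext fun x =>
    (Submodule.eq_starProjection_of_mem_of_inner_eq_zero (h.1 x) (h.2.2 x)).symm

theorem Submodule.starProjection_apply_of_mapsTo {α : E → E}
    (hα_add : ∀ x y, α (x + y) = α x + α y) {K L : Submodule ℂ E} [K.HasOrthogonalProjection]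
    [L.HasOrthogonalProjection] (hK : Set.MapsTo α K L) (hKperp : Set.MapsTo α Kᗮ Lᗮ) (x : E) :
    L.starProjection (α x) = α (K.starProjection x) := by
  refine L.eq_starProjection_of_mem_orthogonal (hK (K.starProjection_apply_mem x)) ?_
  have hsplit := congrArg α (K.starProjection_add_starProjection_orthogonal x)
  rw [hα_add] at hsplit
  rw [← hsplit, add_sub_cancel_left]
  exact hKperp (Kᗮ.starProjection_apply_mem x)

end Projection

namespace IsOrthPolarization

variable {E : Type} [NormedAddCommGroup E] [InnerProductSpace ℂ E] {α : E → E}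
  {W : Submodule ℂ E}

theorem image_eq_orthogonal (hW : IsOrthPolarization α W) : α '' W = (Wᗮ : Set E) := by
  refine Set.Subset.antisymm ?_ fun v hv => ?_
  · rintro - ⟨y, hy, rfl⟩
    exact (W.mem_orthogonal _).2 fun u hu => hW.2.1 u hu y hy
  · obtain ⟨x, hx, y, hy, rfl⟩ := hW.2.2 v
    have hxv : ⟪x, x + α y⟫_ℂ = 0 := (W.mem_orthogonal _).1 hv x hx
    rw [inner_add_right, hW.2.1 x hx y hy, add_zero, inner_self_eq_zero] at hxv
    exact ⟨y, hy, by rw [hxv, zero_add]⟩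

theorem mapsTo (hW : IsOrthPolarization α W) : Set.MapsTo α W Wᗮ :=
  fun _ hy => hW.image_eq_orthogonal ▸ Set.mem_image_of_mem α hy

theorem mapsTo_orthogonal (hW : IsOrthPolarization α W) (hα_invol : Function.Involutive α) :
    Set.MapsTo α Wᗮ W := by
  intro z hz
  obtain ⟨w, hw, rfl⟩ : z ∈ α '' W := hW.image_eq_orthogonal ▸ hz
  rwa [hα_invol w]

theorem starProjection_orthogonal_apply (hW : IsOrthPolarization α W)
    [W.HasOrthogonalProjection] (hα_add : ∀ x y, α (x + y) = α x + α y)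
    (hα_invol : Function.Involutive α) (x : E) :
    Wᗮ.starProjection (α x) = α (W.starProjection x) :=
  Submodule.starProjection_apply_of_mapsTo hα_add hW.mapsTo
    ((hW.mapsTo_orthogonal hα_invol).mono_right W.le_orthogonal_orthogonal) x

theorem starProjection_apply (hW : IsOrthPolarization α W) [W.HasOrthogonalProjection]
    (hα_add : ∀ x y, α (x + y) = α x + α y) (hα_invol : Function.Involutive α) (x : E) :
    W.starProjection (α x) = α (Wᗮ.starProjection x) :=
  Submodule.starProjection_apply_of_mapsTo hα_add (hW.mapsTo_orthogonal hα_invol)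
    (W.orthogonal_orthogonal.symm ▸ hW.mapsTo) x

theorem hasOrthogonalProjection [CompleteSpace E] (hW : IsOrthPolarization α W) :
    W.HasOrthogonalProjection :=
  have := hW.1.completeSpace_coe
  inferInstance

end IsOrthPolarization

section HSRel

variable {E : Type} [NormedAddCommGroup E] [InnerProductSpace ℂ E] {α : E → E}
  {W W₁ W₂ W₃ : Submodule ℂ E}

theorem hsRel_iff [W₁.HasOrthogonalProjection] [W₂ᗮ.HasOrthogonalProjection]
    (hW₂ : IsOrthPolarization α W₂) :
    HSRel α W₁ W₂ ↔ IsHilbertSchmidt (W₂ᗮ.starProjection ∘L W₁.starProjection) := by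
  rw [HSRel, hW₂.image_eq_orthogonal]
  refine ⟨fun h => h _ _ (isOrthProjOn_starProjection W₁) (isOrthProjOn_starProjection W₂ᗮ), ?_⟩
  rintro h P Q hP hQ
  rwa [hP.eq_starProjection, hQ.eq_starProjection]

variable [CompleteSpace E]

theorem hsRel_refl (hW : IsOrthPolarization α W) [W.HasOrthogonalProjection] : HSRel α W W := by
  rw [hsRel_iff hW, Submodule.starProjection_comp_starProjection_eq_zero_iff.2
    (Submodule.isOrtho_orthogonal_left W)]
  exact isHilbertSchmidt_zero

theorem HSRel.symm (h : HSRel α W₁ W₂) (hα_add : ∀ x y, α (x + y) = α x + α y)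
    (hα_invol : Function.Involutive α) (hα_inner : ∀ x y, ⟪α x, α y⟫_ℂ = ⟪y, x⟫_ℂ)
    (h₁ : IsOrthPolarization α W₁) (h₂ : IsOrthPolarization α W₂) [W₁.HasOrthogonalProjection]
    [W₂.HasOrthogonalProjection] : HSRel α W₂ W₁ := by
  rw [hsRel_iff h₂] at h
  rw [hsRel_iff h₁]
  refine h.adjoint.of_semiconj hα_inner hα_invol.surjective fun x => ?_
  rw [ContinuousLinearMap.adjoint_comp, (isSelfAdjoint_starProjection W₁).adjoint_eq,
    (isSelfAdjoint_starProjection W₂ᗮ).adjoint_eq, ContinuousLinearMap.comp_apply,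
    ContinuousLinearMap.comp_apply, h₂.starProjection_apply hα_add hα_invol,
    h₁.starProjection_orthogonal_apply hα_add hα_invol]

theorem HSRel.trans (h₁₂ : HSRel α W₁ W₂) (h₂₃ : HSRel α W₂ W₃) (h₂ : IsOrthPolarization α W₂)
    (h₃ : IsOrthPolarization α W₃) [W₁.HasOrthogonalProjection] [W₂.HasOrthogonalProjection] :
    HSRel α W₁ W₃ := by
  rw [hsRel_iff h₂] at h₁₂
  rw [hsRel_iff h₃] at h₂₃ ⊢
  have hsplit : W₃ᗮ.starProjection ∘L W₁.starProjection =
      (W₃ᗮ.starProjection ∘L W₂.starProjection) ∘L W₁.starProjection +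
        W₃ᗮ.starProjection ∘L (W₂ᗮ.starProjection ∘L W₁.starProjection) := by
    ext x
    simp only [add_apply, ContinuousLinearMap.comp_apply, ← map_add,
      W₂.starProjection_add_starProjection_orthogonal]
  rw [hsplit]
  exact (h₂₃.comp_clm _).add (h₁₂.clm_comp _)

end HSRel

theorem HSRel_is_equivalence_general {E : Type} [NormedAddCommGroup E] [InnerProductSpace ℂ E]
    [CompleteSpace E]
    (α : E → E)
    (hα_add : ∀ x y, α (x + y) = α x + α y)
    (hα_invol : ∀ x, α (α x) = x)
    (hα_inner : ∀ x y, (inner ℂ (α x) (α y) : ℂ) = (inner ℂ y x : ℂ)) :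
    (∀ W : Submodule ℂ E, IsOrthPolarization α W → HSRel α W W) ∧
    (∀ W₁ W₂ : Submodule ℂ E, IsOrthPolarization α W₁ → IsOrthPolarization α W₂ →
      HSRel α W₁ W₂ → HSRel α W₂ W₁) ∧
    (∀ W₁ W₂ W₃ : Submodule ℂ E, IsOrthPolarization α W₁ → IsOrthPolarization α W₂ →
      IsOrthPolarization α W₃ → HSRel α W₁ W₂ → HSRel α W₂ W₃ → HSRel α W₁ W₃) := by
  refine ⟨fun W hW => ?_, fun W₁ W₂ h₁ h₂ h => ?_, fun W₁ W₂ W₃ h₁ h₂ h₃ h₁₂ h₂₃ => ?_⟩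
  · have := hW.hasOrthogonalProjection
    exact hsRel_refl hW
  · have := h₁.hasOrthogonalProjection
    have := h₂.hasOrthogonalProjection
    exact h.symm hα_add hα_invol hα_inner h₁ h₂
  · have := h₁.hasOrthogonalProjection
    have := h₂.hasOrthogonalProjection
    exact h₁₂.trans h₂₃ h₂ h₃

/-- The relation ∼ is an equivalence relation on the set Pol^g(H) of orthogonal
polarizations. -/
theorem HSRel_is_equivalence {E : Type} [NormedAddCommGroup E] [InnerProductSpace ℂ E]
    [CompleteSpace E]
    (α : E → E)
    (hα_add : ∀ x y, α (x + y) = α x + α y)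
    (hα_smul : ∀ (c : ℂ) (x : E), α (c • x) = (starRingEnd ℂ) c • α x)
    (hα_invol : ∀ x, α (α x) = x)
    (hα_inner : ∀ x y, (inner ℂ (α x) (α y) : ℂ) = (inner ℂ y x : ℂ)) :
    (∀ W : Submodule ℂ E, IsOrthPolarization α W → HSRel α W W) ∧
    (∀ W₁ W₂ : Submodule ℂ E, IsOrthPolarization α W₁ → IsOrthPolarization α W₂ →
      HSRel α W₁ W₂ → HSRel α W₂ W₁) ∧
    (∀ W₁ W₂ W₃ : Submodule ℂ E, IsOrthPolarization α W₁ → IsOrthPolarization α W₂ →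
      IsOrthPolarization α W₃ → HSRel α W₁ W₂ → HSRel α W₂ W₃ → HSRel α W₁ W₃) :=
  HSRel_is_equivalence_general α hα_add hα_invol hα_inner
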